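/- The group obtained from the presentation ⟨a, b, c | a² = b² = c² = (ab)³ = (bc)³ = (ca)³ = 1, abac = 1⟩ is isomorphic to the symmetric group S₃. -/

import Mathlib

/-!
The relation `abac = 1` together with `a² = b² = 1` forces `c = aba`, so the group is generated
by the two involutions `a`, `b` with `(ab)³ = 1`. The braid relation `aba = bab` then makes
`{1, a, b, ab, ba, aba}` closed under right multiplication by `a` and `b`, so the group has at
most six elements. Sending `a`, `b`, `c` to the transpositions `(0 1)`, `(1 2)`, `(0 2)` respects
the relations and hits every transposition of `Fin 3`, hence is onto `S₃`, and bijective by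
counting.
-/

/-- Relations ⟨a,b,c | a²=b²=c²=(ab)³=(bc)³=(ca)³=1, abac=1⟩. -/
def s3Rels : Set (FreeGroup (Fin 3)) :=
  { (FreeGroup.of 0) ^ 2, (FreeGroup.of 1) ^ 2, (FreeGroup.of 2) ^ 2,
    (FreeGroup.of 0 * FreeGroup.of 1) ^ 3,
    (FreeGroup.of 1 * FreeGroup.of 2) ^ 3,
    (FreeGroup.of 2 * FreeGroup.of 0) ^ 3,
    FreeGroup.of 0 * FreeGroup.of 1 * FreeGroup.of 0 * FreeGroup.of 2 }

section
variable {G : Type*} [Group G] {x y : G}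

theorem inv_eq_self_of_sq_eq_one (hx : x ^ 2 = 1) : x⁻¹ = x :=
  inv_eq_of_mul_eq_one_right (by rw [← sq, hx])

theorem closure_pair_subset_of_sq_eq_one_of_mul_pow_three_eq_one [DecidableEq G]
    (hx : x ^ 2 = 1) (hy : y ^ 2 = 1) (hxy : (x * y) ^ 3 = 1) :
    (Subgroup.closure {x, y} : Set G) ⊆ ({1, x, y, x * y, y * x, x * y * x} : Finset G) := by
  have hxx (g : G) : x * (x * g) = g := by rw [← mul_assoc, ← sq, hx, one_mul]
  have hxyxy : x * (y * (x * y)) = y * x := by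
    have := eq_inv_of_mul_eq_one_left (a := (x * y) ^ 2) (by rw [← pow_succ, hxy])
    rwa [mul_inv_rev, inv_eq_self_of_sq_eq_one hx, inv_eq_self_of_sq_eq_one hy, sq,
      mul_assoc] at this
  have hyxy : y * (x * y) = x * (y * x) := by rw [← hxyxy, hxx]
  have hstep : ∀ g ∈ ({1, x, y, x * y, y * x, x * y * x} : Set G), ∀ s ∈ ({x, y} : Set G),
      g * s ∈ ({1, x, y, x * y, y * x, x * y * x} : Set G) := by
    simp only [Set.mem_insert_iff, Set.mem_singleton_iff]
    rintro g hg s (rfl | rfl) <;> rcases hg with h | h | h | h | h | h <;> rw [h] <;>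
      simp [mul_assoc, hxx, hyxy, ← sq, hx, hy]
  intro g hg
  push_cast
  induction hg using Subgroup.closure_induction_right with
  | one => simp
  | mul_right g _ s hs ih => exact hstep g ih s hs
  | mul_inv_cancel g _ s hs ih =>
    obtain rfl | rfl := hs
    · rw [inv_eq_self_of_sq_eq_one hx]; exact hstep g ih _ (.inl rfl)
    · rw [inv_eq_self_of_sq_eq_one hy]; exact hstep g ih _ (.inr rfl)

end

theorem finite_and_nat_card_le_of_forall_mem {α : Type*} {s : Finset α} (h : ∀ a, a ∈ s) :
    Finite α ∧ Nat.card α ≤ s.card := by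
  have hs : Set.univ ⊆ (s : Set α) := fun a _ => h a
  refine ⟨Set.finite_univ_iff.mp (s.finite_toSet.subset hs), ?_⟩
  rw [← Set.ncard_univ, ← Set.ncard_coe_finset]
  exact Set.ncard_le_ncard hs s.finite_toSet

namespace s3Rels

open PresentedGroup

local notation "Γ" => PresentedGroup s3Rels

theorem of_sq_eq_one (i : Fin 3) : (of i : Γ) ^ 2 = 1 := by
  fin_cases i <;> exact one_of_mem (by simp [s3Rels])

theorem of_zero_mul_of_one_pow_three_eq_one : (of 0 * of 1 : Γ) ^ 3 = 1 :=
  one_of_mem (by simp [s3Rels])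

theorem of_two_eq_of_zero_mul_of_one_mul_of_zero : (of 2 : Γ) = of 0 * of 1 * of 0 := by
  have habac : (of 0 * of 1 * of 0 * of 2 : Γ) = 1 := one_of_mem (by simp [s3Rels])
  rw [eq_inv_of_mul_eq_one_right habac, mul_inv_rev, mul_inv_rev, mul_assoc]
  simp only [inv_eq_self_of_sq_eq_one (of_sq_eq_one _)]

theorem closure_of_zero_of_one : Subgroup.closure {of 0, of 1} = (⊤ : Subgroup Γ) := by
  rw [eq_top_iff, ← closure_range_of, Subgroup.closure_le]
  have h0 : of 0 ∈ Subgroup.closure {of 0, (of 1 : Γ)} := Subgroup.subset_closure (.inl rfl)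
  have h1 : of 1 ∈ Subgroup.closure {of 0, (of 1 : Γ)} := Subgroup.subset_closure (.inr rfl)
  rintro _ ⟨i, rfl⟩
  fin_cases i
  · exact h0
  · exact h1
  · exact of_two_eq_of_zero_mul_of_one_mul_of_zero ▸ mul_mem (mul_mem h0 h1) h0

theorem finite_and_nat_card_le_six : Finite Γ ∧ Nat.card Γ ≤ 6 := by
  classical
  have hmem (g : Γ) := closure_pair_subset_of_sq_eq_one_of_mul_pow_three_eq_one
    (of_sq_eq_one 0) (of_sq_eq_one 1) of_zero_mul_of_one_pow_three_eq_one
    (closure_of_zero_of_one ▸ Subgroup.mem_top g)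
  exact (finite_and_nat_card_le_of_forall_mem hmem).imp_right (·.trans Finset.card_le_six)

def transposition : Fin 3 → Equiv.Perm (Fin 3) :=
  ![Equiv.swap 0 1, Equiv.swap 1 2, Equiv.swap 0 2]

theorem lift_transposition_eq_one : ∀ r ∈ s3Rels, FreeGroup.lift transposition r = 1 := by
  simp only [s3Rels, Set.mem_insert_iff, Set.mem_singleton_iff]
  rintro r (rfl | rfl | rfl | rfl | rfl | rfl | rfl) <;> decide

def toPerm : Γ →* Equiv.Perm (Fin 3) := toGroup lift_transposition_eq_one

theorem toPerm_surjective : Function.Surjective toPerm := by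
  rw [← MonoidHom.range_eq_top, eq_top_iff, ← Equiv.Perm.closure_isSwap, Subgroup.closure_le]
  have hswap : ∀ i j : Fin 3, i ≠ j → ∃ k, transposition k = Equiv.swap i j := by decide
  rintro _ ⟨i, j, hij, rfl⟩
  obtain ⟨k, hk⟩ := hswap i j hij
  exact hk ▸ ⟨_, toGroup.of lift_transposition_eq_one⟩

end s3Rels

/-- The presented group is isomorphic to the symmetric group S₃. -/
theorem presented_group_iso_S3 :
    Nonempty (PresentedGroup s3Rels ≃* Equiv.Perm (Fin 3)) := by
  obtain ⟨_, hle_six⟩ := s3Rels.finite_and_nat_card_le_six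
  have hcard : Nat.card (PresentedGroup s3Rels) ≤ Nat.card (Equiv.Perm (Fin 3)) := by
    rwa [Nat.card_perm, Nat.card_fin]
  exact ⟨.ofBijective s3Rels.toPerm (s3Rels.toPerm_surjective.bijective_of_nat_card_le hcard)⟩
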